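/- arXiv:2105.00940 — 7 statements merged into one kernel-verified Lean document; each statement's English description precedes it below -/
import Mathlib

section
/- For each row of the Mermin–Peres square, the three operators in that row mutually commute: for every i ∈ {1,2,3} and every j, j' ∈ {1,2,3}, V_{ij} · V_{ij'} = V_{ij'} · V_{ij}. -/
open Matrix
open scoped Kronecker

noncomputable section

/-- The Pauli matrix σx. -/
def σx : Matrix (Fin 2) (Fin 2) ℂ := !![0, 1; 1, 0]

/-- The Pauli matrix σy. -/
def σy : Matrix (Fin 2) (Fin 2) ℂ := !![0, -Complex.I; Complex.I, 0]

/-- The Pauli matrix σz. -/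
def σz : Matrix (Fin 2) (Fin 2) ℂ := !![1, 0; 0, -1]

lemma pxx : σx * σx = 1 := by
  ext i j; fin_cases i <;> fin_cases j <;> simp [σx, Matrix.mul_apply, Fin.sum_univ_succ]
lemma pyy : σy * σy = 1 := by
  ext i j; fin_cases i <;> fin_cases j <;> simp [σy, Matrix.mul_apply, Fin.sum_univ_succ]
lemma pzz : σz * σz = 1 := by
  ext i j; fin_cases i <;> fin_cases j <;> simp [σz, Matrix.mul_apply, Fin.sum_univ_succ]
lemma pxy : σx * σy = Complex.I • σz := by
  ext i j; fin_cases i <;> fin_cases j <;> simp [σx, σy, σz, Matrix.mul_apply, Fin.sum_univ_succ]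
lemma pyx : σy * σx = (-Complex.I) • σz := by
  ext i j; fin_cases i <;> fin_cases j <;> simp [σx, σy, σz, Matrix.mul_apply, Fin.sum_univ_succ]
lemma pxz : σx * σz = (-Complex.I) • σy := by
  ext i j; fin_cases i <;> fin_cases j <;> simp [σx, σy, σz, Matrix.mul_apply, Fin.sum_univ_succ]
lemma pzx : σz * σx = Complex.I • σy := by
  ext i j; fin_cases i <;> fin_cases j <;> simp [σx, σy, σz, Matrix.mul_apply, Fin.sum_univ_succ]
lemma pyz : σy * σz = Complex.I • σx := by
  ext i j; fin_cases i <;> fin_cases j <;> simp [σx, σy, σz, Matrix.mul_apply, Fin.sum_univ_succ]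
lemma pzy : σz * σy = (-Complex.I) • σx := by
  ext i j; fin_cases i <;> fin_cases j <;> simp [σx, σy, σz, Matrix.mul_apply, Fin.sum_univ_succ]

/-- The Mermin–Peres square of nine 4×4 operators, `MP i j` being the entry in
row `i`, column `j`. -/
def MP : Fin 3 → Fin 3 → Matrix (Fin 2 × Fin 2) (Fin 2 × Fin 2) ℂ :=
  ![![σx ⊗ₖ (1 : Matrix (Fin 2) (Fin 2) ℂ), (1 : Matrix (Fin 2) (Fin 2) ℂ) ⊗ₖ σx, σx ⊗ₖ σx],
    ![(1 : Matrix (Fin 2) (Fin 2) ℂ) ⊗ₖ σy, σy ⊗ₖ (1 : Matrix (Fin 2) (Fin 2) ℂ), σy ⊗ₖ σy],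
    ![σx ⊗ₖ σy, σy ⊗ₖ σx, σz ⊗ₖ σz]]

/-- The three operators in each row of the Mermin–Peres square mutually commute. -/
theorem mermin_peres_rows_commute :
    ∀ (i j j' : Fin 3), MP i j * MP i j' = MP i j' * MP i j := by
  intro i j j'
  fin_cases i <;> fin_cases j <;> fin_cases j' <;>
    simp [MP] <;>
    rw [← Matrix.mul_kronecker_mul, ← Matrix.mul_kronecker_mul] <;>
    simp [pxx, pyy, pzz, pxy, pyx, pxz, pzx, pyz, pzy, ← neg_smul,
      Matrix.smul_kronecker, Matrix.kronecker_smul, smul_smul,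
      neg_mul, mul_neg, neg_neg, Complex.I_mul_I, one_smul]
end
end

section
/- For each column of the Mermin–Peres square, the three operators in that column mutually commute: for every j ∈ {1,2,3} and every i, i' ∈ {1,2,3}, V_{ij} · V_{i'j} = V_{i'j} · V_{ij}. -/
open Matrix
open scoped Kronecker

noncomputable section

lemma kron_comm {A B C D : Matrix (Fin 2) (Fin 2) ℂ} (h1 : A*C = C*A) (h2 : B*D = D*B) :
    (A ⊗ₖ B) * (C ⊗ₖ D) = (C ⊗ₖ D) * (A ⊗ₖ B) := by
  rw [← mul_kronecker_mul, ← mul_kronecker_mul, h1, h2]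

lemma kron_anticomm {A B C D : Matrix (Fin 2) (Fin 2) ℂ} (h1 : A*C = (-1:ℂ) • (C*A))
    (h2 : B*D = (-1:ℂ) • (D*B)) :
    (A ⊗ₖ B) * (C ⊗ₖ D) = (C ⊗ₖ D) * (A ⊗ₖ B) := by
  rw [← mul_kronecker_mul, ← mul_kronecker_mul, h1, h2, smul_kronecker, kronecker_smul,
    smul_smul]
  norm_num

lemma c1 (A : Matrix (Fin 2) (Fin 2) ℂ) : A * 1 = 1 * A := by rw [mul_one, one_mul]

lemma c1' (A : Matrix (Fin 2) (Fin 2) ℂ) : 1 * A = A * 1 := by rw [mul_one, one_mul]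

lemma axy : σx * σy = (-1:ℂ) • (σy * σx) := by
  ext a b
  fin_cases a <;> fin_cases b <;>
    simp [σx, σy, Matrix.mul_apply, Fin.sum_univ_two]

lemma axz : σx * σz = (-1:ℂ) • (σz * σx) := by
  ext a b
  fin_cases a <;> fin_cases b <;>
    simp [σx, σz, Matrix.mul_apply, Fin.sum_univ_two]

lemma ayz : σy * σz = (-1:ℂ) • (σz * σy) := by
  ext a b
  fin_cases a <;> fin_cases b <;>
    simp [σy, σz, Matrix.mul_apply, Fin.sum_univ_two]

lemma ayx : σy * σx = (-1:ℂ) • (σx * σy) := by rw [axy, smul_smul]; norm_num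

lemma azx : σz * σx = (-1:ℂ) • (σx * σz) := by rw [axz, smul_smul]; norm_num

lemma azy : σz * σy = (-1:ℂ) • (σy * σz) := by rw [ayz, smul_smul]; norm_num

lemma fin3_mk_two (h : 2 < 3) : (⟨2, h⟩ : Fin 3) = 2 := rfl

/-- The three operators in each column of the Mermin–Peres square mutually commute. -/
theorem mermin_peres_columns_commute :
    ∀ (j i i' : Fin 3), MP i j * MP i' j = MP i' j * MP i j := by
  intro j i i'
  fin_cases j <;> fin_cases i <;> fin_cases i' <;>
    simp only [MP, Fin.mk_zero, Fin.mk_one, fin3_mk_two, Matrix.cons_val_zero,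
      Matrix.cons_val_one, Matrix.head_cons, Matrix.cons_val_two, Matrix.tail_cons]
  · exact kron_comm (c1 _) (c1' _)
  · exact kron_comm rfl (c1' _)
  · exact kron_comm (c1' _) (c1 _)
  · exact kron_comm (c1' _) rfl
  · exact kron_comm rfl (c1 _)
  · exact kron_comm (c1 _) rfl
  · exact kron_comm (c1' _) (c1 _)
  · exact kron_comm (c1' _) rfl
  · exact kron_comm (c1 _) (c1' _)
  · exact kron_comm rfl (c1' _)
  · exact kron_comm (c1 _) rfl
  · exact kron_comm rfl (c1 _)
  · exact kron_anticomm axy axy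
  · exact kron_anticomm axz axz
  · exact kron_anticomm ayx ayx
  · exact kron_anticomm ayz ayz
  · exact kron_anticomm azx azx
  · exact kron_anticomm azy azy

end
end

section
/- Each operator in the Mermin–Peres square anticommutes with each of the four operators not in its row or column: for all i, k, j, l ∈ {1,2,3} with i ≠ k and j ≠ l, V_{ij} · V_{kl} = − V_{kl} · V_{ij}. -/
open Matrix
open scoped Kronecker

noncomputable section

lemma pauli_xy : σx * σy = -(σy * σx) := by
  ext i j; fin_cases i <;> fin_cases j <;>
    simp [σx, σy, Matrix.mul_apply, Fin.sum_univ_two]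

lemma pauli_yx : σy * σx = -(σx * σy) := by rw [pauli_xy, neg_neg]

lemma pauli_xz : σx * σz = -(σz * σx) := by
  ext i j; fin_cases i <;> fin_cases j <;>
    simp [σx, σz, Matrix.mul_apply, Fin.sum_univ_two]

lemma pauli_zx : σz * σx = -(σx * σz) := by rw [pauli_xz, neg_neg]

lemma pauli_yz : σy * σz = -(σz * σy) := by
  ext i j; fin_cases i <;> fin_cases j <;>
    simp [σy, σz, Matrix.mul_apply, Fin.sum_univ_two]

lemma pauli_zy : σz * σy = -(σy * σz) := by rw [pauli_yz, neg_neg]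

lemma anti1 {A B C D : Matrix (Fin 2) (Fin 2) ℂ} (h1 : A * C = -(C * A))
    (h2 : Commute B D) : (A ⊗ₖ B) * (C ⊗ₖ D) = -((C ⊗ₖ D) * (A ⊗ₖ B)) := by
  rw [← Matrix.mul_kronecker_mul, ← Matrix.mul_kronecker_mul, h1, h2.eq]
  ext x y; simp [Matrix.kroneckerMap_apply]

lemma anti2 {A B C D : Matrix (Fin 2) (Fin 2) ℂ} (h1 : Commute A C)
    (h2 : B * D = -(D * B)) : (A ⊗ₖ B) * (C ⊗ₖ D) = -((C ⊗ₖ D) * (A ⊗ₖ B)) := by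
  rw [← Matrix.mul_kronecker_mul, ← Matrix.mul_kronecker_mul, h1.eq, h2]
  ext x y; simp [Matrix.kroneckerMap_apply]

set_option maxHeartbeats 2000000 in
/-- Each operator of the Mermin–Peres square anticommutes with each of the four
operators not in its row or column. -/
theorem mermin_peres_anticommute :
    ∀ (i k j l : Fin 3), i ≠ k → j ≠ l → MP i j * MP k l = -(MP k l * MP i j) := by
  intro i k j l hik hjl
  fin_cases i <;> fin_cases k <;> fin_cases j <;> fin_cases l <;>
    simp_all only [ne_eq, Fin.mk.injEq, not_true_eq_false, not_false_eq_true, MP,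
      Matrix.cons_val', Matrix.cons_val_zero, Matrix.cons_val_one, Matrix.head_cons,
      Matrix.empty_val', Matrix.cons_val_fin_one, Matrix.head_fin_const,
      Matrix.cons_val_two, Matrix.tail_cons] <;>
    first
      | (apply anti1 <;>
          first
            | exact pauli_xy | exact pauli_yx | exact pauli_xz | exact pauli_zx
            | exact pauli_yz | exact pauli_zy
            | exact Commute.one_left _ | exact Commute.one_right _
            | exact Commute.refl _)
      | (apply anti2 <;>
          first
            | exact pauli_xy | exact pauli_yx | exact pauli_xz | exact pauli_zx
            | exact pauli_yz | exact pauli_zy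
            | exact Commute.one_left _ | exact Commute.one_right _
            | exact Commute.refl _)

end
end

section
/- The product of the three operators in the third column of the Mermin–Peres square is the negative of the 4×4 identity matrix: V_{13} · V_{23} · V_{33} = −I₄. -/
open Matrix
open scoped Kronecker

noncomputable section

/-- The product of the three operators in the third column of the Mermin–Peres
square is minus the 4×4 identity. -/
theorem mermin_peres_third_column_product :
    MP 0 2 * MP 1 2 * MP 2 2 = -1 := by
  ext ⟨a, b⟩ ⟨c, d⟩
  simp only [MP, σx, σy, σz, Matrix.cons_val', Matrix.cons_val_zero, Matrix.cons_val_one,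
    Matrix.head_cons, Matrix.cons_val_two, Matrix.tail_cons, Matrix.empty_val',
    Matrix.cons_val_fin_one, Matrix.mul_apply, Matrix.kroneckerMap_apply,
    Fintype.sum_prod_type, Fin.sum_univ_two, Matrix.neg_apply, Matrix.one_apply]
  fin_cases a <;> fin_cases b <;> fin_cases c <;> fin_cases d <;>
    simp [Matrix.one_apply, Complex.ext_iff] <;>
    decide
end
end

section
/- The six row/column constraint sets of any hidden variable model of the Mermin–Peres square have empty common intersection: (R₁ ∩ R₂ ∩ R₃) ∩ (C₁ ∩ C₂ ∩ C₃) = ∅. Equivalently, no single hidden state ω can simultaneously satisfy all three row constraints, the first two column constraints, and the third column constraint. -/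
variable {Ω : Type*}

/-- The row constraint set `R_i`: all three values in row `i` lie in {−1,+1}
and their product is `+1`. -/
def Rset (V : Fin 3 → Fin 3 → Ω → ℝ) (i : Fin 3) : Set Ω :=
  {ω | (∀ j : Fin 3, V i j ω = -1 ∨ V i j ω = 1) ∧ V i 0 ω * V i 1 ω * V i 2 ω = 1}

/-- The column constraint set `C_j` for the first two columns: all three values in
column `j` lie in {−1,+1} and their product is `+1`. -/
def Cset (V : Fin 3 → Fin 3 → Ω → ℝ) (j : Fin 3) : Set Ω :=
  {ω | (∀ i : Fin 3, V i j ω = -1 ∨ V i j ω = 1) ∧ V 0 j ω * V 1 j ω * V 2 j ω = 1}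

/-- The third column constraint set `C₃`: all three values in column 3 lie in
{−1,+1} and their product is `−1`. -/
def C3set (V : Fin 3 → Fin 3 → Ω → ℝ) : Set Ω :=
  {ω | (∀ i : Fin 3, V i 2 ω = -1 ∨ V i 2 ω = 1) ∧ V 0 2 ω * V 1 2 ω * V 2 2 ω = -1}

/-- The six row/column constraint sets of any hidden variable model of the
Mermin–Peres square have empty common intersection. -/
theorem rowColumn_sets_empty_intersection (V : Fin 3 → Fin 3 → Ω → ℝ) :
    (Rset V 0 ∩ Rset V 1 ∩ Rset V 2) ∩ (Cset V 0 ∩ Cset V 1 ∩ C3set V) = ∅ := by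
  ext ω
  simp only [Set.mem_inter_iff, Set.mem_empty_iff_false, iff_false, Rset, Cset, C3set,
    Set.mem_setOf_eq, not_and]
  rintro ⟨⟨⟨_, hr0⟩, ⟨_, hr1⟩⟩, ⟨_, hr2⟩⟩ ⟨⟨_, hc0⟩, ⟨_, hc1⟩⟩ _ hc3
  have key : V 0 0 ω * V 0 1 ω * V 0 2 ω * (V 1 0 ω * V 1 1 ω * V 1 2 ω) *
      (V 2 0 ω * V 2 1 ω * V 2 2 ω) =
      V 0 0 ω * V 1 0 ω * V 2 0 ω * (V 0 1 ω * V 1 1 ω * V 2 1 ω) *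
      (V 0 2 ω * V 1 2 ω * V 2 2 ω) := by ring
  rw [hr0, hr1, hr2, hc0, hc1, hc3] at key
  norm_num at key
end

section
/- If ω ∈ R₂ ∩ R₃ ∩ C₁ ∩ C₂ ∩ C₃ (i.e., ω is contained in all six row/column sets except possibly R₁), then V₁₃(ω) = −X₁(ω)·X₂(ω), i.e., V₁₃(ω) = −V₁₁(ω)·V₁₂(ω). -/
variable {Ω : Type*}

/-- If `ω` lies in all six row/column sets except possibly `R₁`, then
`V₁₃(ω) = −X₁(ω)·X₂(ω)`, where `X₁ = V₁₁` and `X₂ = V₁₂`. -/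
theorem V13_decomposition (V : Fin 3 → Fin 3 → Ω → ℝ) (ω : Ω)
    (hω : ω ∈ Rset V 1 ∩ Rset V 2 ∩ Cset V 0 ∩ Cset V 1 ∩ C3set V) :
    V 0 2 ω = -(V 0 0 ω * V 0 1 ω) := by
  obtain ⟨⟨⟨⟨hR1, hR2⟩, hC0⟩, hC1⟩, hC3⟩ := hω
  obtain ⟨r1s, r1p⟩ := hR1
  obtain ⟨r2s, r2p⟩ := hR2
  obtain ⟨c0s, c0p⟩ := hC0
  obtain ⟨c1s, c1p⟩ := hC1
  obtain ⟨c3s, c3p⟩ := hC3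
  have s00 : V 0 0 ω ^ 2 = 1 := by rcases c0s 0 with h | h <;> rw [h] <;> norm_num
  have s01 : V 0 1 ω ^ 2 = 1 := by rcases c1s 0 with h | h <;> rw [h] <;> norm_num
  have h2 : V 0 0 ω * V 0 1 ω * V 0 2 ω = -1 := by
    calc V 0 0 ω * V 0 1 ω * V 0 2 ω
        = (V 0 0 ω * V 0 1 ω * V 0 2 ω) *
          ((V 1 0 ω * V 1 1 ω * V 1 2 ω) * (V 2 0 ω * V 2 1 ω * V 2 2 ω)) := by
          rw [r1p, r2p]; ring
      _ = (V 0 0 ω * V 1 0 ω * V 2 0 ω) * (V 0 1 ω * V 1 1 ω * V 2 1 ω) *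
          (V 0 2 ω * V 1 2 ω * V 2 2 ω) := by ring
      _ = -1 := by rw [c0p, c1p, c3p]; ring
  calc V 0 2 ω = V 0 0 ω ^ 2 * V 0 1 ω ^ 2 * V 0 2 ω := by rw [s00, s01]; ring
    _ = V 0 0 ω * V 0 1 ω * (V 0 0 ω * V 0 1 ω * V 0 2 ω) := by ring
    _ = -(V 0 0 ω * V 0 1 ω) := by rw [h2]; ring
end

section
/- There exist no real numbers x₁, x₂, y₁, y₂, v₃₁, v₃₂, each in {−1,+1}, simultaneously satisfying x₁·x₂ = −1, y₁·y₂ = −1, v₃₁·x₁·y₂ = +1, v₃₂·y₁·x₂ = +1, and v₃₁·v₃₂ = −1. Consequently, in any hidden variable model the sets B₁, B₂, B₃, C₁, C₂ have empty common intersection: B₁ ∩ B₂ ∩ B₃ ∩ C₁ ∩ C₂ = ∅. -/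
variable {Ω : Type*}

/-- The set `B_i`: the first two values in row `i` lie in {−1,+1} and their
product is `−1`. -/
def Bset (V : Fin 3 → Fin 3 → Ω → ℝ) (i : Fin 3) : Set Ω :=
  {ω | (V i 0 ω = -1 ∨ V i 0 ω = 1) ∧ (V i 1 ω = -1 ∨ V i 1 ω = 1) ∧
    V i 0 ω * V i 1 ω = -1}

/-- Multiplying the last two relations gives `v₁ v₂ (x₁ x₂) (y₁ y₂) = 1`, and the first two
relations make `(x₁ x₂) (y₁ y₂) = 1`. -/
theorem mul_eq_one_of_cabello_relations {R : Type*} [CommRing R] {x₁ x₂ y₁ y₂ v₁ v₂ : R}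
    (hx : x₁ * x₂ = -1) (hy : y₁ * y₂ = -1) (h₁ : v₁ * x₁ * y₂ = 1) (h₂ : v₂ * y₁ * x₂ = 1) :
    v₁ * v₂ = 1 := by
  linear_combination (v₂ * y₁ * x₂) * h₁ + h₂ - v₁ * v₂ * y₁ * y₂ * hx + v₁ * v₂ * hy

/-- No sign assignments `x₁,x₂,y₁,y₂,v₃₁,v₃₂ ∈ {−1,+1}` satisfy all five Cabello
relations, and consequently `B₁ ∩ B₂ ∩ B₃ ∩ C₁ ∩ C₂ = ∅` in any hidden variable
model. -/
theorem cabello_relations_unsatisfiable :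
    (¬ ∃ x₁ x₂ y₁ y₂ v₃₁ v₃₂ : ℝ,
        (x₁ = -1 ∨ x₁ = 1) ∧ (x₂ = -1 ∨ x₂ = 1) ∧ (y₁ = -1 ∨ y₁ = 1) ∧
        (y₂ = -1 ∨ y₂ = 1) ∧ (v₃₁ = -1 ∨ v₃₁ = 1) ∧ (v₃₂ = -1 ∨ v₃₂ = 1) ∧
        x₁ * x₂ = -1 ∧ y₁ * y₂ = -1 ∧ v₃₁ * x₁ * y₂ = 1 ∧ v₃₂ * y₁ * x₂ = 1 ∧
        v₃₁ * v₃₂ = -1) ∧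
    ∀ (Ω : Type*) (V : Fin 3 → Fin 3 → Ω → ℝ),
      Bset V 0 ∩ Bset V 1 ∩ Bset V 2 ∩ Cset V 0 ∩ Cset V 1 = ∅ := by
  have relations_inconsistent {x₁ x₂ y₁ y₂ v₁ v₂ : ℝ} (hx : x₁ * x₂ = -1) (hy : y₁ * y₂ = -1)
      (h₁ : v₁ * x₁ * y₂ = 1) (h₂ : v₂ * y₁ * x₂ = 1) (hv : v₁ * v₂ = -1) : False := by
    have := mul_eq_one_of_cabello_relations hx hy h₁ h₂
    norm_num [hv] at this
  refine ⟨?_, fun Ω V => Set.eq_empty_of_forall_notMem ?_⟩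
  · rintro ⟨x₁, x₂, y₁, y₂, v₁, v₂, -, -, -, -, -, -, hx, hy, h₁, h₂, hv⟩
    exact relations_inconsistent hx hy h₁ h₂ hv
  · rintro ω ⟨⟨⟨⟨⟨-, -, b₀⟩, -, -, b₁⟩, -, -, b₂⟩, -, c₀⟩, -, c₁⟩
    exact relations_inconsistent (y₁ := V 1 1 ω) (y₂ := V 1 0 ω) b₀ (by linear_combination b₁)
      (by linear_combination c₀) (by linear_combination c₁) b₂
end
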